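/- Let μ: ∂R → U_n(ℂ) and suppose that for all indices j,k,l,m ∈ [n] the scalar functions w ↦ μ_{jk}(w) · conj(μ_{lm}(w)) are constant whenever (j,k) = (l,m) or k ≠ m. Then the map Ad(μ(w)): M_n(ℂ) → M_n(ℂ), X ↦ μ(w) X μ(w)*, is independent of w, i.e., conjugation by μ(w) is a constant element of PU_n(ℂ). -/
import Mathlib


open Matrix

theorem stmt8 {n : ℕ} {X : Type*} [TopologicalSpace X] [Nonempty X]
    (μ : X → Matrix (Fin n) (Fin n) ℂ)
    (hμ : ∀ w, μ w ∈ Matrix.unitaryGroup (Fin n) ℂ)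
    (hconst : ∀ j k l m : Fin n, ((j, k) = (l, m) ∨ k ≠ m) →
      ∃ c : ℂ, ∀ w, μ w j k * star (μ w l m) = c) :
    ∀ (w w' : X) (Y : Matrix (Fin n) (Fin n) ℂ),
      μ w * Y * (μ w)ᴴ = μ w' * Y * (μ w')ᴴ := by
  classical
  -- row orthonormality: ∑_b μ_{lb} conj(μ_{lb}) = 1
  have hrow : ∀ w (l : Fin n), ∑ b, μ w l b * star (μ w l b) = 1 := by
    intro w l
    have h1 : μ w * star (μ w) = 1 := mem_unitaryGroup_iff.mp (hμ w)
    have := congrFun (congrFun h1 l) l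
    simpa [mul_apply, star_apply] using this
  -- column orthonormality: ∑_i conj(μ_{ia}) μ_{ia} = 1
  have hcol : ∀ w (a : Fin n), ∑ i, star (μ w i a) * μ w i a = 1 := by
    intro w a
    have h1 : star (μ w) * μ w = 1 := mem_unitaryGroup_iff'.mp (hμ w)
    have := congrFun (congrFun h1 a) a
    simpa [mul_apply, star_apply] using this
  have key : ∀ (j a l b : Fin n), ∃ c : ℂ, ∀ w, μ w j a * star (μ w l b) = c := by
    intro j a l b
    by_cases hab : a = b
    · subst hab
      by_cases hjl : j = l
      · subst hjl; exact hconst j a j a (Or.inl rfl)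
      · obtain ⟨d, hd⟩ := hconst l a l a (Or.inl rfl)
        by_cases hd1 : d = 1
        · -- |μ_{la}| = 1, so μ_{ja} = 0 for all w
          refine ⟨0, fun w => ?_⟩
          have hc := hcol w a
          -- pass to real normSq sum
          have hre : ∀ i : Fin n, star (μ w i a) * μ w i a
              = (Complex.normSq (μ w i a) : ℂ) := fun i => by
            rw [mul_comm]; exact (Complex.mul_conj _)
          have hsum : (↑(∑ i, Complex.normSq (μ w i a)) : ℂ) = 1 := by
            push_cast
            rw [← hc]
            exact Finset.sum_congr rfl fun i _ => (hre i).symm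
          have hsumR : ∑ i, Complex.normSq (μ w i a) = 1 := by
            exact_mod_cast hsum
          have hla : Complex.normSq (μ w l a) = 1 := by
            have := hd w
            rw [hd1] at this
            have : (↑(Complex.normSq (μ w l a)) : ℂ) = 1 := by
              rw [← Complex.mul_conj]; exact this
            exact_mod_cast this
          have herase : ∑ i ∈ Finset.univ.erase l, Complex.normSq (μ w i a) = 0 := by
            have := Finset.add_sum_erase Finset.univ
              (fun i => Complex.normSq (μ w i a)) (Finset.mem_univ l)
            rw [hsumR, hla] at this
            linarith
          have hzero : Complex.normSq (μ w j a) = 0 := by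
            have hnn : ∀ i ∈ Finset.univ.erase l, 0 ≤ Complex.normSq (μ w i a) :=
              fun i _ => Complex.normSq_nonneg _
            have := (Finset.sum_eq_zero_iff_of_nonneg hnn).mp herase j
              (Finset.mem_erase.mpr ⟨hjl, Finset.mem_univ j⟩)
            exact this
          have : μ w j a = 0 := Complex.normSq_eq_zero.mp hzero
          rw [this, zero_mul]
        · -- d ≠ 1 : cancel (1 - d)
          obtain ⟨w₀⟩ := ‹Nonempty X›
          refine ⟨μ w₀ j a * star (μ w₀ l a), fun w => ?_⟩
          have hterm : ∀ b : Fin n, b ≠ a →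
              ∃ cb : ℂ, ∀ w, (μ w j a * star (μ w l b)) * (μ w l b * star (μ w l a)) = cb := by
            intro b hba
            obtain ⟨c1, h1⟩ := hconst j a l b (Or.inr hba.symm)
            obtain ⟨c2, h2⟩ := hconst l b l a (Or.inr hba)
            exact ⟨c1 * c2, fun w => by rw [← h1 w, ← h2 w]⟩
          have hw : ∀ w, (μ w j a * star (μ w l a)) * (1 - d)
              = ∑ b ∈ Finset.univ.erase a,
                  (μ w j a * star (μ w l b)) * (μ w l b * star (μ w l a)) := by
            intro w
            have hr : (1 : ℂ) - d
                = ∑ b ∈ Finset.univ.erase a, μ w l b * star (μ w l b) := by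
              have := Finset.add_sum_erase Finset.univ
                (fun b => μ w l b * star (μ w l b)) (Finset.mem_univ a)
              rw [hrow w l, hd w] at this
              linear_combination -this
            rw [hr, Finset.mul_sum]
            exact Finset.sum_congr rfl fun b _ => by ring
          have heq : (μ w j a * star (μ w l a)) * (1 - d)
              = (μ w₀ j a * star (μ w₀ l a)) * (1 - d) := by
            rw [hw w, hw w₀]
            refine Finset.sum_congr rfl fun b hb => ?_
            obtain ⟨cb, hcb⟩ := hterm b (Finset.ne_of_mem_erase hb)
            rw [hcb w, hcb w₀]
          exact mul_right_cancel₀ (sub_ne_zero.mpr (Ne.symm hd1)) heq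
    · exact hconst j a l b (Or.inr hab)
  intro w w' Y
  ext j l
  have expand : ∀ w, (μ w * Y * (μ w)ᴴ) j l
      = ∑ b, ∑ a, (μ w j a * star (μ w l b)) * Y a b := by
    intro w
    simp only [mul_apply, conjTranspose_apply, Finset.sum_mul]
    exact Finset.sum_congr rfl fun b _ => Finset.sum_congr rfl fun a _ => by ring
  rw [expand w, expand w']
  refine Finset.sum_congr rfl fun b _ => Finset.sum_congr rfl fun a _ => ?_
  obtain ⟨c, hc⟩ := key j a l b
  rw [hc w, hc w']
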